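/- Let 𝒜 be an almost disjoint family as in Lemma 2 (each member not an IP-set, and for every AP-set B and finite-to-one f : B → ℕ there are an AP-set C ⊆ B and A ∈ 𝒜 with f[C] ⊆ A). Let X be the one-point compactification of the associated Ψ-space. Then X is a van der Waerden space: for every sequence (x_n)_{n∈ℕ} in X there is an AP-set B ⊆ ℕ such that (x_n)_{n∈B} converges in X. -/
import Mathlib


open Set Filter

/-- `A` contains arithmetic progressions of all finite lengths. -/
def IsAPSet (A : Set ℕ) : Prop :=
  ∀ k : ℕ, ∃ a d : ℕ, 0 < d ∧ ∀ i < k, a + i * d ∈ A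

/-- The set of finite sums of distinct elements of `B`. -/
def FS (B : Set ℕ) : Set ℕ :=
  {n | ∃ F : Finset ℕ, F.Nonempty ∧ ↑F ⊆ B ∧ n = ∑ i ∈ F, i}

/-- `S` is an IP-set: it contains `FS B` for some infinite `B`. -/
def IsIPSet (S : Set ℕ) : Prop :=
  ∃ B : Set ℕ, B.Infinite ∧ FS B ⊆ S

/-- `f` is finite-to-one on `C`. -/
def FinToOneOn (f : ℕ → ℕ) (C : Set ℕ) : Prop :=
  ∀ m : ℕ, (C ∩ f ⁻¹' {m}).Finite

/-- The underlying set of the Mrówka–Isbell Ψ-space over a family `𝒜`: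
the natural numbers together with a point `p_A` for each `A ∈ 𝒜`. -/
abbrev PsiSpace (𝒜 : Set (Set ℕ)) : Type := ℕ ⊕ ↥𝒜

/-- The Ψ-space topology: `Z` is open iff for every `p_A ∈ Z`, `A \ Z` is finite.
(In particular each natural number is isolated.) -/
instance psiTopology (𝒜 : Set (Set ℕ)) : TopologicalSpace (PsiSpace 𝒜) where
  IsOpen Z := ∀ A : ↥𝒜, Sum.inr A ∈ Z → ((A : Set ℕ) \ {n | Sum.inl n ∈ Z}).Finite
  isOpen_univ := by intro A _; simp
  isOpen_inter := by
    intro s t hs ht A hA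
    refine ((hs A hA.1).union (ht A hA.2)).subset ?_
    intro x hx
    by_cases h : Sum.inl x ∈ s <;> simp_all [Set.mem_diff]
  isOpen_sUnion := by
    intro S hS A hA
    obtain ⟨Z, hZ, hAZ⟩ := hA
    exact ((hS Z hZ) A hAZ).subset fun x hx => ⟨hx.1, fun h => hx.2 ⟨Z, hZ, h⟩⟩

theorem finVdW (k r : ℕ) : ∃ N : ℕ, ∀ C : ℕ → Fin (r + 1), ∃ a d : ℕ, 0 < d ∧
    (∀ i < k, a + i * d ≤ N) ∧ ∃ c, ∀ i < k, C (a + i * d) = c := by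
  obtain ⟨ι, _inst, hι⟩ := Combinatorics.Line.exists_mono_in_high_dimension (Fin (k + 1)) (Fin (r + 1))
  refine ⟨k * Fintype.card ι, fun C => ?_⟩
  obtain ⟨l, c, hl⟩ := hι fun v => C (∑ i, (v i : ℕ))
  classical
  set s : Finset ι := Finset.univ.filter (fun i => l.idxFun i = none) with hs
  set a : ℕ := ∑ i ∈ sᶜ, ((l.idxFun i).map (fun x : Fin (k+1) => (x : ℕ))).getD 0 with ha
  have hd : 0 < s.card := by
    refine Finset.card_pos.mpr ⟨l.proper.choose, ?_⟩
    rw [hs, Finset.mem_filter]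
    exact ⟨Finset.mem_univ _, l.proper.choose_spec⟩
  have hsum : ∀ x : Fin (k+1), (∑ i, ((l x i : Fin (k+1)) : ℕ)) = a + (x : ℕ) * s.card := by
    intro x
    rw [← Finset.sum_add_sum_compl s]
    have h1 : (∑ i ∈ s, ((l x i : Fin (k+1)) : ℕ)) = (x : ℕ) * s.card := by
      rw [Finset.sum_congr rfl (fun i hi => ?_), Finset.sum_const, smul_eq_mul, mul_comm]
      rw [hs, Finset.mem_filter] at hi
      rw [Combinatorics.Line.coe_apply, hi.2]; rfl
    have h2 : (∑ i ∈ sᶜ, ((l x i : Fin (k+1)) : ℕ)) = a := by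
      rw [ha]
      refine Finset.sum_congr rfl (fun i hi => ?_)
      rw [Finset.mem_compl, hs, Finset.mem_filter] at hi
      cases h : l.idxFun i with
      | none => exact absurd h (by simpa using hi)
      | some y => rw [Combinatorics.Line.coe_apply, h]; rfl
    rw [h1, h2, Nat.add_comm]
  refine ⟨a, s.card, hd, ?_, c, ?_⟩
  · intro i hik
    have hb : a + (i : ℕ) * s.card ≤ a + k * s.card := by
      have := Nat.mul_le_mul_right s.card (le_of_lt hik)
      omega
    have hcard : s.card ≤ Fintype.card ι := by
      simpa using Finset.card_le_card (Finset.subset_univ s)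
    have haa : a ≤ k * (Fintype.card ι - s.card) := by
      calc a ≤ ∑ _i ∈ sᶜ, k := Finset.sum_le_sum (fun i _ => ?_)
        _ = (Fintype.card ι - s.card) * k := by
            rw [Finset.sum_const, smul_eq_mul, Finset.card_compl]
        _ = k * (Fintype.card ι - s.card) := mul_comm _ _
      · cases h : l.idxFun i with
        | none => simp
        | some y => simpa [h] using Nat.lt_succ_iff.mp y.isLt
    have : k * s.card + k * (Fintype.card ι - s.card) = k * Fintype.card ι := by
      rw [← Nat.mul_add, Nat.add_sub_cancel' hcard]
    omega
  · intro i hik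
    have hx : ((⟨i, by omega⟩ : Fin (k+1)) : ℕ) = i := rfl
    have h := hl ⟨i, by omega⟩
    simp only at h
    rw [hsum ⟨i, by omega⟩, hx] at h
    exact h

theorem relVdW {B : Set ℕ} (hB : IsAPSet B) (k r : ℕ) (C : ℕ → Fin (r + 1)) :
    ∃ a d : ℕ, 0 < d ∧ (∀ i < k, a + i * d ∈ B) ∧ ∃ c, ∀ i < k, C (a + i * d) = c := by
  obtain ⟨N, hN⟩ := finVdW k r
  obtain ⟨a0, d0, hd0, hAP⟩ := hB (N + 1)
  obtain ⟨a, d, hd, hbd, c, hc⟩ := hN (fun i => C (a0 + i * d0))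
  refine ⟨a0 + a * d0, d * d0, Nat.mul_pos hd hd0, fun i hi => ?_, c, fun i hi => ?_⟩
  · have h : a0 + a * d0 + i * (d * d0) = a0 + (a + i * d) * d0 := by ring
    rw [h]
    exact hAP _ (by have := hbd i hi; omega)
  · have h : a0 + a * d0 + i * (d * d0) = a0 + (a + i * d) * d0 := by ring
    rw [h]
    exact hc i hi

theorem apset_infinite {A : Set ℕ} (hA : IsAPSet A) : A.Infinite := by
  intro hfin
  obtain ⟨a, d, hd, h⟩ := hA (hfin.toFinset.card + 1)
  have hle : hfin.toFinset.card + 1 ≤ hfin.toFinset.card := by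
    have := Finset.card_le_card_of_injOn (f := fun i => a + i * d)
      (s := Finset.range (hfin.toFinset.card + 1)) (t := hfin.toFinset)
      (fun i hi => hfin.mem_toFinset.mpr (h i (Finset.mem_range.mp hi)))
      (fun i _ j _ hij => by simp only at hij; exact Nat.eq_of_mul_eq_mul_right hd (by omega))
    simpa using this
  omega

theorem dichotomy {B : Set ℕ} (g : ℕ → ℕ) (hB : IsAPSet B) :
    (∃ m, IsAPSet (B ∩ g ⁻¹' {m})) ∨
      (∃ C : Set ℕ, C ⊆ B ∧ IsAPSet C ∧ ∀ m : ℕ, (C ∩ g ⁻¹' {m}).Finite) := by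
  by_cases hfib : ∃ m, IsAPSet (B ∩ g ⁻¹' {m})
  · exact Or.inl hfib
  push_neg at hfib
  right
  -- for each m, a length kb m beyond which no AP in the fiber
  have hk : ∀ m, ∃ k, ∀ a d, 0 < d → ∃ i < k, a + i * d ∉ B ∩ g ⁻¹' {m} := by
    intro m
    have := hfib m
    unfold IsAPSet at this
    push_neg at this
    obtain ⟨k, hkk⟩ := this
    exact ⟨k, fun a d hd => by
      obtain ⟨i, hi1, hi2⟩ := hkk a d hd
      exact ⟨i, hi1, hi2⟩⟩
  choose kb hkb using hk
  -- for each l, an AP of length l inside B with all g-values ≥ l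
  have hP : ∀ l : ℕ, ∃ a d : ℕ, 0 < d ∧ ∀ i < l, a + i * d ∈ B ∧ l ≤ g (a + i * d) := by
    intro l
    set L : ℕ := l + (Finset.range l).sum kb with hL
    obtain ⟨a, d, hd, hmem, c, hc⟩ := relVdW hB L l (fun n => ⟨min (g n) l, by omega⟩)
    have hcl : (c : ℕ) = l := by
      by_contra hne
      have hclt : (c : ℕ) < l := by
        have h0 : 0 < L := by omega
        have := hc 0 h0
        have := congrArg Fin.val this
        simp only at this
        omega
      have hkle : kb (c : ℕ) ≤ L := by
        have : kb (c : ℕ) ≤ (Finset.range l).sum kb :=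
          Finset.single_le_sum (f := kb) (fun _ _ => Nat.zero_le _) (Finset.mem_range.mpr hclt)
        omega
      obtain ⟨i, hi1, hi2⟩ := hkb (c : ℕ) a d hd
      refine hi2 ⟨hmem i (by omega), ?_⟩
      have := congrArg Fin.val (hc i (by omega))
      simp only at this
      have : min (g (a + i * d)) l = (c : ℕ) := this
      simp only [Set.mem_preimage, Set.mem_singleton_iff]
      omega
    refine ⟨a, d, hd, fun i hi => ⟨hmem i (by omega), ?_⟩⟩
    have := congrArg Fin.val (hc i (by omega))
    simp only at this
    omega
  choose pa pd hpd hpmem using hP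
  refine ⟨⋃ l, {n | ∃ i < l, n = pa l + i * pd l}, ?_, ?_, ?_⟩
  · rintro n ⟨_, ⟨l, rfl⟩, i, hi, rfl⟩
    exact (hpmem l i hi).1
  · intro k
    refine ⟨pa k, pd k, hpd k, fun i hi => ?_⟩
    exact Set.mem_iUnion.mpr ⟨k, i, hi, rfl⟩
  · intro m
    have hsub : (⋃ l, {n | ∃ i < l, n = pa l + i * pd l}) ∩ g ⁻¹' {m} ⊆
        ⋃ l ∈ Finset.range (m + 1), {n | ∃ i < l, n = pa l + i * pd l} := by
      rintro n ⟨hn, hg⟩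
      obtain ⟨_, ⟨l, rfl⟩, i, hi, rfl⟩ := hn
      have hge := (hpmem l i hi).2
      have : g (pa l + i * pd l) = m := hg
      exact Set.mem_biUnion (Finset.mem_range.mpr (by omega)) ⟨i, hi, rfl⟩
    refine Set.Finite.subset ?_ hsub
    refine Set.Finite.biUnion (Finset.range (m + 1)).finite_toSet (fun l _ => ?_)
    have : {n | ∃ i < l, n = pa l + i * pd l} ⊆ (fun i => pa l + i * pd l) '' (Set.Iio l) := by
      rintro n ⟨i, hi, rfl⟩
      exact ⟨i, hi, rfl⟩
    exact Set.Finite.subset ((Set.finite_Iio l).image _) this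

theorem apsplit {C : Set ℕ} (hC : IsAPSet C) (P : ℕ → Prop) :
    IsAPSet {n ∈ C | P n} ∨ IsAPSet {n ∈ C | ¬ P n} := by
  classical
  rcases dichotomy (fun n => if P n then 0 else 1) hC with ⟨m, hm⟩ | ⟨C', _, hC'AP, hfin'⟩
  · by_cases hm0 : m = 0
    · left
      have he : C ∩ (fun n => if P n then 0 else 1) ⁻¹' {m} = {n ∈ C | P n} := by
        ext n
        simp only [Set.mem_inter_iff, Set.mem_preimage, Set.mem_singleton_iff, Set.mem_setOf_eq,
          hm0]
        constructor
        · rintro ⟨h1, h2⟩; exact ⟨h1, by by_contra hP; simp [hP] at h2⟩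
        · rintro ⟨h1, h2⟩; exact ⟨h1, by simp [h2]⟩
      rwa [he] at hm
    · by_cases hm1 : m = 1
      · right
        have he : C ∩ (fun n => if P n then 0 else 1) ⁻¹' {m} = {n ∈ C | ¬ P n} := by
          ext n
          simp only [Set.mem_inter_iff, Set.mem_preimage, Set.mem_singleton_iff, Set.mem_setOf_eq,
            hm1]
          constructor
          · rintro ⟨h1, h2⟩; exact ⟨h1, by intro hP; simp [hP] at h2⟩
          · rintro ⟨h1, h2⟩; exact ⟨h1, by simp [h2]⟩
        rwa [he] at hm
      · exfalso
        obtain ⟨a, d, hd, h⟩ := hm 1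
        have := (h 0 Nat.one_pos).2
        simp only [Set.mem_preimage, Set.mem_singleton_iff] at this
        split_ifs at this <;> omega
  · exfalso
    refine apset_infinite hC'AP (Set.Finite.subset ((hfin' 0).union (hfin' 1)) ?_)
    intro n hn
    by_cases h : P n
    · exact Or.inl ⟨hn, by simp [h]⟩
    · exact Or.inr ⟨hn, by simp [h]⟩

theorem compact_finite_inr {𝒜 : Set (Set ℕ)} {K : Set (PsiSpace 𝒜)} (hK : IsCompact K) :
    {A : ↥𝒜 | Sum.inr A ∈ K}.Finite := by
  classical
  set u : Option ↥𝒜 → Set (PsiSpace 𝒜) :=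
    fun o => o.elim (Set.range Sum.inl) (fun A => insert (Sum.inr A) (Set.range Sum.inl)) with hu
  have hopen : ∀ o, IsOpen (u o) := by
    intro o
    show ∀ A : ↥𝒜, Sum.inr A ∈ u o → ((A : Set ℕ) \ {n | Sum.inl n ∈ u o}).Finite
    intro A hA
    cases o with
    | none => simp [hu] at hA
    | some A0 =>
      have he : (A : Set ℕ) \ {n | Sum.inl n ∈ u (some A0)} = ∅ := by
        ext n; simp [hu]
      rw [he]; exact Set.finite_empty
  have hcov : K ⊆ ⋃ o, u o := by
    intro z _
    cases z with
    | inl n => exact Set.mem_iUnion.mpr ⟨none, ⟨n, rfl⟩⟩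
    | inr A => exact Set.mem_iUnion.mpr ⟨some A, Set.mem_insert _ _⟩
  obtain ⟨t, ht⟩ := hK.elim_finite_subcover u hopen hcov
  have hsub : {A : ↥𝒜 | Sum.inr A ∈ K} ⊆ Option.some ⁻¹' (↑t : Set (Option ↥𝒜)) := by
    intro A hA
    obtain ⟨o, hot, hmem⟩ := Set.mem_iUnion₂.mp (ht hA)
    cases o with
    | none => simp [hu] at hmem
    | some A0 =>
      rcases hmem with h | h
      · cases Sum.inr_injective h; exact hot
      · simp at h
  exact Set.Finite.subset (t.finite_toSet.preimage (Option.some_injective _).injOn) hsub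

/-- If `𝒜` is an almost disjoint family of infinite non-IP sets such that for
every AP-set `B` and finite-to-one `f` on `B` some AP-subset of `B` has image
inside a member of `𝒜`, then the one-point compactification of the Ψ-space
over `𝒜` is a van der Waerden space. -/
theorem onePoint_psi_vanDerWaerden (𝒜 : Set (Set ℕ))
    (hinf : ∀ A ∈ 𝒜, A.Infinite)
    (had : ∀ A ∈ 𝒜, ∀ B ∈ 𝒜, A ≠ B → (A ∩ B).Finite)
    (hip : ∀ A ∈ 𝒜, ¬ IsIPSet A)
    (habs : ∀ (B : Set ℕ) (f : ℕ → ℕ), IsAPSet B → FinToOneOn f B →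
      ∃ C : Set ℕ, C ⊆ B ∧ IsAPSet C ∧ ∃ A ∈ 𝒜, f '' C ⊆ A) :
    ∀ x : ℕ → OnePoint (PsiSpace 𝒜), ∃ B : Set ℕ, IsAPSet B ∧
      ∃ q : OnePoint (PsiSpace 𝒜), ∀ U ∈ nhds q, {n ∈ B | x n ∉ U}.Finite := by
  intro x
  classical
  set g : ℕ → ℕ := fun n => sInf {m | x m = x n} with hgdef
  have hg : ∀ n, x (g n) = x n := fun n => Nat.sInf_mem (⟨n, rfl⟩ : {m | x m = x n}.Nonempty)
  have hgeq : ∀ {n n' : ℕ}, x n = x n' → g n = g n' := by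
    intro n n' h
    simp only [hgdef, h]
  have huniv : IsAPSet Set.univ := fun _ => ⟨0, 1, Nat.one_pos, fun _ _ => trivial⟩
  rcases dichotomy g huniv with ⟨m, hm⟩ | ⟨C, _, hCAP, hfin⟩
  · refine ⟨Set.univ ∩ g ⁻¹' {m}, hm, x m, fun U hU => ?_⟩
    have he : {n ∈ Set.univ ∩ g ⁻¹' {m} | x n ∉ U} = ∅ := by
      rw [Set.eq_empty_iff_forall_notMem]
      rintro n ⟨⟨-, hgn⟩, hxn⟩
      have : x n = x m := by
        rw [← hg n]
        exact congrArg x hgn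
      exact hxn (this ▸ mem_of_mem_nhds hU)
    rw [he]; exact Set.finite_empty
  · have hfibx : ∀ v, {n | n ∈ C ∧ x n = v}.Finite := by
      intro v
      by_cases hv : ∃ n0, n0 ∈ C ∧ x n0 = v
      · obtain ⟨n0, hn0C, hn0⟩ := hv
        refine (hfin (g n0)).subset ?_
        rintro n ⟨hnC, hxn⟩
        exact ⟨hnC, hgeq (hxn.trans hn0.symm)⟩
      · push_neg at hv
        have : {n | n ∈ C ∧ x n = v} = ∅ := by
          rw [Set.eq_empty_iff_forall_notMem]
          rintro n ⟨h1, h2⟩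
          exact hv n h1 h2
        rw [this]; exact Set.finite_empty
    rcases apsplit hCAP (fun n => ∃ m : ℕ, x n = OnePoint.some (Sum.inl m)) with hB1 | hB2
    · -- natural-valued case
      set B1 : Set ℕ := {n ∈ C | ∃ m : ℕ, x n = OnePoint.some (Sum.inl m)} with hB1def
      set f : ℕ → ℕ := fun n => sInf {m | x n = OnePoint.some (Sum.inl m)} with hfdef
      have hf : ∀ n ∈ B1, x n = OnePoint.some (Sum.inl (f n)) := by
        rintro n ⟨-, hm⟩
        exact Nat.sInf_mem hm
      have hfto : FinToOneOn f B1 := by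
        intro m
        refine (hfibx (OnePoint.some (Sum.inl m))).subset ?_
        rintro n ⟨hn, hfm⟩
        refine ⟨hn.1, ?_⟩
        rw [hf n hn]
        exact congrArg (fun j => OnePoint.some (Sum.inl j)) hfm
      obtain ⟨D, hDsub, hDAP, A, hA𝒜, hfD⟩ := habs B1 f hB1 hfto
      refine ⟨D, hDAP, OnePoint.some (Sum.inr ⟨A, hA𝒜⟩), fun U hU => ?_⟩
      obtain ⟨V, hVU, hVopen, hqV⟩ := mem_nhds_iff.mp hU
      have hop := (OnePoint.isOpen_def.mp hVopen).2
      have hF : ((A : Set ℕ) \ {n | Sum.inl n ∈ (OnePoint.some ⁻¹' V : Set (PsiSpace 𝒜))}).Finite :=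
        hop ⟨A, hA𝒜⟩ hqV
      refine Set.Finite.subset (hF.biUnion (fun m _ =>
        ((hfto m).subset (Set.inter_subset_inter hDsub (subset_refl _)) :
          (D ∩ f ⁻¹' {m}).Finite))) ?_
      rintro n ⟨hnD, hxnU⟩
      have hfa : f n ∈ A := hfD ⟨n, hnD, rfl⟩
      have hxv := hf n (hDsub hnD)
      have hnotV : Sum.inl (f n) ∉ (OnePoint.some ⁻¹' V : Set (PsiSpace 𝒜)) := by
        intro h
        exact hxnU (hVU (by rw [hxv]; exact h))
      exact Set.mem_biUnion (⟨hfa, hnotV⟩ : f n ∈ A \ _) ⟨hnD, rfl⟩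
    · -- infinity case
      set B2 : Set ℕ := {n ∈ C | ¬ ∃ m : ℕ, x n = OnePoint.some (Sum.inl m)} with hB2def
      refine ⟨B2, hB2, OnePoint.infty, fun U hU => ?_⟩
      obtain ⟨V, hVU, hVopen, hqV⟩ := mem_nhds_iff.mp hU
      have hK : IsCompact ((OnePoint.some ⁻¹' V : Set (PsiSpace 𝒜))ᶜ) :=
        ((OnePoint.isOpen_iff_of_mem' hqV).mp hVopen).1
      have hT := compact_finite_inr hK
      refine Set.Finite.subset (hT.biUnion
        (fun A' _ => hfibx (OnePoint.some (Sum.inr A')))) ?_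
      rintro n ⟨hnB2, hxnU⟩
      have hxnV : x n ∉ V := fun h => hxnU (hVU h)
      match hxn : x n with
      | OnePoint.infty => exact absurd (hxn ▸ hqV) hxnV
      | OnePoint.some (Sum.inl m) => exact absurd ⟨m, hxn⟩ hnB2.2
      | OnePoint.some (Sum.inr A') =>
        refine Set.mem_biUnion (show A' ∈ {A : ↥𝒜 | Sum.inr A ∈ _} from ?_) ⟨hnB2.1, hxn⟩
        intro hmem
        exact hxnV (hxn ▸ hmem)
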